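/- Let G be a countable discrete group and let M = {x ∈ βG : r(x) is a minimal closed right ideal}. Then there exists x ∈ M such that the set {r(gx) : g ∈ G} is finite if and only if βG contains a unique minimal closed right ideal. -/

import Mathlib

open Filter Topology Set

-- The semigroup structure on `βG = Ultrafilter G` extending the multiplication of `G`;
-- with this structure `βG` is a compact right topological semigroup.
attribute [local instance] Ultrafilter.semigroup

/-- `R ⊆ βG` is a right ideal: `R · βG ⊆ R`. -/
def IsRightIdeal {G : Type*} [Group G] (R : Set (Ultrafilter G)) : Prop :=
  ∀ x ∈ R, ∀ y : Ultrafilter G, x * y ∈ R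

/-- `I ⊆ βG` is a two-sided ideal: `I` is nonempty, `βG · I ⊆ I` and `I · βG ⊆ I`. -/
def IsTwoSidedIdeal {G : Type*} [Group G] (I : Set (Ultrafilter G)) : Prop :=
  I.Nonempty ∧ ∀ x ∈ I, ∀ y : Ultrafilter G, x * y ∈ I ∧ y * x ∈ I

/-- A minimal closed right ideal of `βG`. -/
def IsMinClosedRightIdeal {G : Type*} [Group G] (R : Set (Ultrafilter G)) : Prop :=
  R.Nonempty ∧ IsClosed R ∧ IsRightIdeal R ∧
    ∀ R' : Set (Ultrafilter G), R' ⊆ R → R'.Nonempty → IsClosed R' → IsRightIdeal R' → R' = R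

/-- `r x`, the principal closed right ideal generated by `x`: the closure of `x · βG`. -/
def rIdeal {G : Type*} [Group G] (x : Ultrafilter G) : Set (Ultrafilter G) :=
  closure (Set.range fun y : Ultrafilter G => x * y)

/-- `M = {x ∈ βG : r(x) is a minimal closed right ideal}`. -/
def MSet (G : Type*) [Group G] : Set (Ultrafilter G) :=
  {x : Ultrafilter G | IsMinClosedRightIdeal (rIdeal x)}



section Basics
variable {G : Type*} [Group G]
set_option linter.unusedSectionVars false

theorem continuous_umap (f : G → G) : Continuous (fun u : Ultrafilter G => u.map f) :=
  ultrafilterBasis_is_basis.continuous_iff.2 <| Set.forall_mem_range.mpr fun s => by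
    convert ultrafilter_isOpen_basic (f ⁻¹' s) using 1
    ext u; exact Ultrafilter.mem_map

theorem pure_mul' (g : G) (x : Ultrafilter G) :
    (pure g : Ultrafilter G) * x = x.map (g * ·) :=
  Ultrafilter.coe_inj.mp <| Filter.ext' fun p => by
    simp [Ultrafilter.eventually_mul]

theorem mul_pure' (x : Ultrafilter G) (g : G) :
    x * (pure g : Ultrafilter G) = x.map (· * g) :=
  Ultrafilter.coe_inj.mp <| Filter.ext' fun p => by
    simp [Ultrafilter.eventually_mul]

theorem pure_mul_pure' (a b : G) :
    (pure a : Ultrafilter G) * pure b = pure (a * b) := by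
  rw [pure_mul', Ultrafilter.map_pure]

/-- Left translation by `g` as a homeomorphism of `βG`. -/
def lam (g : G) : Ultrafilter G ≃ₜ Ultrafilter G where
  toFun u := u.map (g * ·)
  invFun u := u.map (g⁻¹ * ·)
  left_inv u := by
    show (u.map _).map _ = u
    rw [Ultrafilter.map_map]; simpa using u.map_id'
  right_inv u := by
    show (u.map _).map _ = u
    rw [Ultrafilter.map_map]; simpa using u.map_id'
  continuous_toFun := continuous_umap _
  continuous_invFun := continuous_umap _

theorem lam_apply (g : G) (x : Ultrafilter G) : lam g x = pure g * x :=
  (pure_mul' g x).symm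

theorem lam_mul (g : G) (x y : Ultrafilter G) : lam g (x * y) = lam g x * y := by
  rw [lam_apply, lam_apply, mul_assoc]

theorem mem_closure_pure {s : Set G} {u : Ultrafilter G} (hs : s ∈ u) :
    u ∈ closure ((pure : G → Ultrafilter G) '' s) := by
  rw [ultrafilterBasis_is_basis.mem_closure_iff]
  rintro o ⟨t, rfl⟩ hu
  obtain ⟨a, has, hat⟩ := Ultrafilter.nonempty_of_mem (u.toFilter.inter_mem hs hu)
  exact ⟨pure a, Ultrafilter.mem_pure.2 hat, ⟨a, has, rfl⟩⟩

theorem mul_mem_closure {u y : Ultrafilter G} {s : Set G} (hs : s ∈ u) :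
    u * y ∈ closure ((fun a => (pure a : Ultrafilter G) * y) '' s) := by
  have h1 : u * y ∈ (· * y) '' closure ((pure : G → Ultrafilter G) '' s) :=
    ⟨u, mem_closure_pure hs, rfl⟩
  have h2 := image_closure_subset_closure_image (Ultrafilter.continuous_mul_left y)
    (s := (pure : G → Ultrafilter G) '' s)
  have := h2 h1
  rwa [Set.image_image] at this

end Basics

section Ideals
variable {G : Type*} [Group G]
set_option linter.unusedSectionVars false

theorem isRightIdeal_rIdeal (x : Ultrafilter G) : IsRightIdeal (rIdeal x) := by
  intro z hz y
  have h2 := image_closure_subset_closure_image (Ultrafilter.continuous_mul_left y)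
    (s := Set.range fun w : Ultrafilter G => x * w)
  have : z * y ∈ closure ((· * y) '' Set.range fun w : Ultrafilter G => x * w) :=
    h2 ⟨z, hz, rfl⟩
  refine closure_mono ?_ this
  rintro _ ⟨_, ⟨w, rfl⟩, rfl⟩
  exact ⟨w * y, (mul_assoc x w y).symm⟩

theorem rIdeal_closed (x : Ultrafilter G) : IsClosed (rIdeal x) := isClosed_closure

theorem rIdeal_nonempty (x : Ultrafilter G) : (rIdeal x).Nonempty :=
  ⟨x * x, subset_closure ⟨x, rfl⟩⟩

theorem rIdeal_subset {R : Set (Ultrafilter G)} (hcl : IsClosed R) (hR : IsRightIdeal R)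
    {x : Ultrafilter G} (hx : x ∈ R) : rIdeal x ⊆ R :=
  closure_minimal (by rintro _ ⟨y, rfl⟩; exact hR x hx y) hcl

theorem rIdeal_pure_mul (g : G) (z : Ultrafilter G) :
    rIdeal ((pure g : Ultrafilter G) * z) = lam g '' rIdeal z := by
  have hr : (Set.range fun y : Ultrafilter G => (pure g : Ultrafilter G) * z * y)
      = lam g '' Set.range fun y : Ultrafilter G => z * y := by
    ext w
    constructor
    · rintro ⟨y, rfl⟩
      exact ⟨z * y, ⟨y, rfl⟩, by simp [lam_mul, lam_apply, mul_assoc]⟩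
    · rintro ⟨_, ⟨y, rfl⟩, rfl⟩
      exact ⟨y, by simp [lam_mul, lam_apply, mul_assoc]⟩
  unfold rIdeal
  rw [hr, Homeomorph.image_closure]

theorem lam_image_min {R : Set (Ultrafilter G)} (g : G) (h : IsMinClosedRightIdeal R) :
    IsMinClosedRightIdeal (lam g '' R) := by
  obtain ⟨hne, hcl, hri, hmin⟩ := h
  refine ⟨hne.image _, (lam g).isClosedMap _ hcl, ?_, ?_⟩
  · rintro _ ⟨z, hz, rfl⟩ y
    exact ⟨z * y, hri z hz y, lam_mul g z y⟩
  · intro R' hsub hne' hcl' hri'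
    have key : (lam g).symm '' R' = R := by
      refine hmin _ ?_ (hne'.image _) ((lam g).symm.isClosedMap _ hcl') ?_
      · intro w hw
        obtain ⟨z, hz, rfl⟩ := hw
        obtain ⟨v, hv, rfl⟩ := hsub hz
        simpa using hv
      · rintro _ ⟨z, hz, rfl⟩ y
        refine ⟨z * y, hri' z hz y, ?_⟩
        obtain ⟨v, hv, rfl⟩ := hsub hz
        show (lam g).symm (lam g v * y) = (lam g).symm (lam g v) * y
        rw [← lam_mul]
        simp
    calc R' = lam g '' ((lam g).symm '' R') := by simp [Set.image_image]
    _ = lam g '' R := by rw [key]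

theorem min_eq_of_inter {R1 R2 : Set (Ultrafilter G)} (h1 : IsMinClosedRightIdeal R1)
    (h2 : IsMinClosedRightIdeal R2) (hne : (R1 ∩ R2).Nonempty) : R1 = R2 := by
  have hri : IsRightIdeal (R1 ∩ R2) := fun z hz y =>
    ⟨h1.2.2.1 z hz.1 y, h2.2.2.1 z hz.2 y⟩
  have e1 := h1.2.2.2 (R1 ∩ R2) inter_subset_left hne (h1.2.1.inter h2.2.1) hri
  have e2 := h2.2.2.2 (R1 ∩ R2) inter_subset_right hne (h1.2.1.inter h2.2.1) hri
  exact e1.symm.trans e2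

theorem exists_min_subset {S : Set (Ultrafilter G)} (hS : S.Nonempty) (hcl : IsClosed S)
    (hri : IsRightIdeal S) : ∃ R ⊆ S, IsMinClosedRightIdeal R := by
  set 𝒮 : Set (Set (Ultrafilter G)) :=
    {T | T ⊆ S ∧ T.Nonempty ∧ IsClosed T ∧ IsRightIdeal T} with h𝒮
  have hzorn : ∀ c ⊆ 𝒮, IsChain (· ⊆ ·) c → c.Nonempty → ∃ lb ∈ 𝒮, ∀ s ∈ c, lb ⊆ s := by
    intro c hcS hchain hcne
    haveI : Nonempty c := hcne.to_subtype
    refine ⟨⋂₀ c, ⟨?_, ?_, ?_, ?_⟩, fun s hs => sInter_subset_of_mem hs⟩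
    · obtain ⟨t, ht⟩ := hcne
      exact (sInter_subset_of_mem ht).trans (hcS ht).1
    · refine IsCompact.nonempty_sInter_of_directed_nonempty_isCompact_isClosed ?_
        (fun U hU => (hcS hU).2.1) (fun U hU => (hcS hU).2.2.1.isCompact)
        (fun U hU => (hcS hU).2.2.1)
      intro a ha b hb
      rcases hchain.total ha hb with h | h
      · exact ⟨a, ha, Subset.rfl, h⟩
      · exact ⟨b, hb, h, Subset.rfl⟩
    · exact isClosed_sInter fun U hU => (hcS hU).2.2.1
    · intro z hz y U hU
      exact (hcS hU).2.2.2 z (hz U hU) y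
  obtain ⟨m, hmS, hmem, hmin⟩ :=
    zorn_superset_nonempty 𝒮 hzorn S ⟨Subset.rfl, hS, hcl, hri⟩
  exact ⟨m, hmem.1, hmem.2.1, hmem.2.2.1, hmem.2.2.2, fun R' hsub hne' hcl' hri' =>
    subset_antisymm hsub (hmin ⟨hsub.trans hmem.1, hne', hcl', hri'⟩ hsub)⟩

end Ideals

section Main
variable {G : Type*} [Group G]
set_option linter.unusedSectionVars false

theorem pure_one_mul' (x : Ultrafilter G) : (pure (1:G) : Ultrafilter G) * x = x := by
  rw [pure_mul']
  have h : (fun a : G => 1 * a) = id := funext one_mul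
  rw [h, x.map_id]

theorem lam_lam (a b : G) (u : Ultrafilter G) : lam a (lam b u) = lam (a*b) u := by
  show (u.map _).map _ = u.map _
  rw [Ultrafilter.map_map]
  congr 1
  funext c
  exact (mul_assoc a b c).symm

theorem lam_one (u : Ultrafilter G) : lam (1:G) u = u := by
  show u.map _ = u
  have h : (fun a : G => 1 * a) = id := funext one_mul
  rw [h, u.map_id]

theorem lam_inv_image (a : G) (s : Set (Ultrafilter G)) : lam a⁻¹ '' (lam a '' s) = s := by
  rw [Set.image_image]
  have h : (fun u => lam a⁻¹ (lam a u)) = fun u : Ultrafilter G => u := by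
    funext u; rw [lam_lam, inv_mul_cancel, lam_one]
  rw [h, Set.image_id']

/-- The stabilizer of `r(x)` under left translation. -/
def stabSub (x : Ultrafilter G) : Subgroup G where
  carrier := {g | rIdeal ((pure g : Ultrafilter G) * x) = rIdeal x}
  one_mem' := by
    show rIdeal ((pure (1:G) : Ultrafilter G) * x) = rIdeal x
    rw [pure_one_mul']
  mul_mem' := by
    intro a b ha hb
    simp only [Set.mem_setOf_eq] at ha hb ⊢
    rw [← pure_mul_pure', mul_assoc, rIdeal_pure_mul, hb, ← rIdeal_pure_mul, ha]
  inv_mem' := by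
    intro a ha
    simp only [Set.mem_setOf_eq] at ha ⊢
    rw [rIdeal_pure_mul]
    nth_rewrite 1 [← ha]
    rw [rIdeal_pure_mul, lam_inv_image]

theorem mem_stabSub {g : G} {x : Ultrafilter G} :
    g ∈ stabSub x ↔ rIdeal ((pure g : Ultrafilter G) * x) = rIdeal x := Iff.rfl

theorem rIdeal_eq_of_rel {x : Ultrafilter G} {a b : G} (h : a⁻¹ * b ∈ stabSub x) :
    rIdeal ((pure a : Ultrafilter G) * x) = rIdeal ((pure b : Ultrafilter G) * x) := by
  have hb : (pure b : Ultrafilter G) * x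
      = (pure a : Ultrafilter G) * ((pure (a⁻¹*b) : Ultrafilter G) * x) := by
    rw [← mul_assoc, pure_mul_pure', mul_inv_cancel_left]
  rw [hb, rIdeal_pure_mul a ((pure (a⁻¹*b) : Ultrafilter G) * x), mem_stabSub.1 h,
    ← rIdeal_pure_mul]

theorem rel_of_rIdeal_eq {x : Ultrafilter G} {a b : G}
    (h : rIdeal ((pure a : Ultrafilter G) * x) = rIdeal ((pure b : Ultrafilter G) * x)) :
    a⁻¹ * b ∈ stabSub x := by
  rw [mem_stabSub]
  have hb : (pure (a⁻¹*b) : Ultrafilter G) * x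
      = (pure a⁻¹ : Ultrafilter G) * ((pure b : Ultrafilter G) * x) := by
    rw [← mul_assoc, pure_mul_pure']
  rw [hb, rIdeal_pure_mul, ← h, rIdeal_pure_mul, lam_inv_image]

end Main

/-- For a countable discrete group `G` with `M = {x : r(x) is a minimal closed right ideal}`:
there exists `x ∈ M` with `{r(gx) : g ∈ G}` finite iff `βG` contains a unique minimal closed
right ideal. -/
theorem finite_orbit_iff_unique {G : Type*} [Group G] [Countable G] :
    (∃ x ∈ MSet G,
        {R : Set (Ultrafilter G) | ∃ g : G, R = rIdeal ((pure g : Ultrafilter G) * x)}.Finite) ↔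
      ∃! R : Set (Ultrafilter G), IsMinClosedRightIdeal R := by
  constructor
  · rintro ⟨x, hx, hfin⟩
    have hx' : IsMinClosedRightIdeal (rIdeal x) := hx
    -- the stabilizer subgroup has finite index
    haveI hQfin : Finite (G ⧸ stabSub x) := by
      haveI := hfin.to_subtype
      have wd : ∀ a b : G, @Setoid.r _ (QuotientGroup.leftRel (stabSub x)) a b →
          rIdeal ((pure a : Ultrafilter G) * x) = rIdeal ((pure b : Ultrafilter G) * x) :=
        fun a b hab => rIdeal_eq_of_rel (QuotientGroup.leftRel_apply.1 hab)
      have hmem : ∀ q : G ⧸ stabSub x,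
          Quotient.liftOn q (fun g => rIdeal ((pure g : Ultrafilter G) * x)) wd ∈
            {R : Set (Ultrafilter G) | ∃ g : G, R = rIdeal ((pure g : Ultrafilter G) * x)} :=
        fun q => Quotient.inductionOn q fun g => ⟨g, rfl⟩
      refine Finite.of_injective
        (fun q : G ⧸ stabSub x =>
          (⟨Quotient.liftOn q (fun g => rIdeal ((pure g : Ultrafilter G) * x)) wd, hmem q⟩ :
            ↥{R : Set (Ultrafilter G) | ∃ g : G, R = rIdeal ((pure g : Ultrafilter G) * x)}))
        ?_
      intro q1 q2 h
      refine Quotient.inductionOn₂ q1 q2 (fun a b h => Quotient.sound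
        (QuotientGroup.leftRel_apply.2 (rel_of_rIdeal_eq h))) (congrArg Subtype.val h)
    haveI : (stabSub x).FiniteIndex := Subgroup.finiteIndex_of_finite_quotient
    -- Claim A : every element of r(x) contains the stabilizer
    have claimA : ∀ w ∈ rIdeal x, ((stabSub x : Subgroup G) : Set G) ∈ w := by
      intro w hw
      obtain ⟨y, hy⟩ := rIdeal_nonempty x
      obtain ⟨q, hq⟩ := (w.map (QuotientGroup.mk (s := stabSub x))).eq_pure_of_finite
      have hqw : (QuotientGroup.mk (s := stabSub x) ⁻¹' {q} : Set G) ∈ w :=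
        Ultrafilter.mem_map.1 (by rw [hq]; exact Ultrafilter.mem_pure.2 rfl)
      obtain ⟨g0, rfl⟩ := QuotientGroup.mk_surjective q
      have himg : ∀ a ∈ (QuotientGroup.mk (s := stabSub x) ⁻¹' {(g0 : G ⧸ stabSub x)} : Set G),
          (pure a : Ultrafilter G) * y ∈ rIdeal ((pure g0 : Ultrafilter G) * x) := by
        intro a ha
        have hab : rIdeal ((pure g0 : Ultrafilter G) * x)
            = rIdeal ((pure a : Ultrafilter G) * x) :=
          rIdeal_eq_of_rel (QuotientGroup.eq.1 (Set.mem_singleton_iff.1 ha).symm)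
        rw [hab, rIdeal_pure_mul]
        exact ⟨y, hy, lam_apply a y⟩
      have hclos : w * y ∈ rIdeal ((pure g0 : Ultrafilter G) * x) := by
        have hm := mul_mem_closure (y := y) hqw
        refine closure_minimal ?_ (rIdeal_closed _) hm
        rintro _ ⟨a, ha, rfl⟩
        exact himg a ha
      have hclos2 : w * y ∈ rIdeal x := isRightIdeal_rIdeal x w hw y
      have hmin2 : IsMinClosedRightIdeal (rIdeal ((pure g0 : Ultrafilter G) * x)) := by
        rw [rIdeal_pure_mul]; exact lam_image_min g0 hx'
      have hg0 : g0 ∈ stabSub x :=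
        mem_stabSub.2 (min_eq_of_inter hmin2 hx' ⟨w * y, hclos, hclos2⟩)
      have hset : (QuotientGroup.mk (s := stabSub x) ⁻¹' {(g0 : G ⧸ stabSub x)} : Set G)
          = ((stabSub x : Subgroup G) : Set G) := by
        ext a
        simp only [Set.mem_preimage, Set.mem_singleton_iff, SetLike.mem_coe]
        constructor
        · intro h
          have h2 : g0⁻¹ * a ∈ stabSub x := QuotientGroup.eq.1 h.symm
          simpa [mul_inv_cancel_left] using (stabSub x).mul_mem hg0 h2
        · intro h
          exact QuotientGroup.eq.2 ((stabSub x).mul_mem ((stabSub x).inv_mem h) hg0)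
      exact hset ▸ hqw
    -- Claim B : the stabilizer is everything
    have claimB : ∀ g : G, g ∈ stabSub x := by
      intro g1
      obtain ⟨y, hy⟩ := rIdeal_nonempty x
      obtain ⟨qn, hqn⟩ :=
        (y.map (QuotientGroup.mk (s := (stabSub x).normalCore))).eq_pure_of_finite
      have hDN : (QuotientGroup.mk (s := (stabSub x).normalCore) ⁻¹' {qn} : Set G) ∈ y :=
        Ultrafilter.mem_map.1 (by rw [hqn]; exact Ultrafilter.mem_pure.2 rfl)
      have hHy : ((stabSub x : Subgroup G) : Set G) ∈ y := claimA y hy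
      obtain ⟨c, hc⟩ := Ultrafilter.nonempty_of_mem (y.toFilter.inter_mem hDN hHy)
      set u : Ultrafilter G := y * (pure (c⁻¹ * g1) : Ultrafilter G) with hu_def
      have hu : u ∈ rIdeal x := isRightIdeal_rIdeal x y hy _
      have hHu : ((stabSub x : Subgroup G) : Set G) ∈ u := claimA u hu
      have hDu : (QuotientGroup.mk (s := (stabSub x).normalCore) ⁻¹'
          {((g1 : G) : G ⧸ (stabSub x).normalCore)} : Set G) ∈ u := by
        rw [hu_def, mul_pure']
        refine Ultrafilter.mem_map.2 (y.toFilter.mem_of_superset hDN ?_)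
        intro a ha
        simp only [Set.mem_preimage, Set.mem_singleton_iff] at ha ⊢
        have hcq : QuotientGroup.mk (s := (stabSub x).normalCore) c = qn :=
          Set.mem_singleton_iff.1 hc.1
        have hac : ((a : G) : G ⧸ (stabSub x).normalCore) = ((c : G) : _) :=
          ha.trans hcq.symm
        rw [QuotientGroup.mk_mul, QuotientGroup.mk_mul, QuotientGroup.mk_inv, hac,
          mul_inv_cancel_left]
      obtain ⟨h, hh⟩ := Ultrafilter.nonempty_of_mem (u.toFilter.inter_mem hHu hDu)
      have hnh : h⁻¹ * g1 ∈ (stabSub x).normalCore :=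
        QuotientGroup.eq.1 (Set.mem_singleton_iff.1 hh.2)
      have h2 : h⁻¹ * g1 ∈ stabSub x := (stabSub x).normalCore_le hnh
      have h3 := (stabSub x).mul_mem hh.1 h2
      simpa [mul_inv_cancel_left] using h3
    -- conclusion : r(x) is the unique minimal closed right ideal
    refine ⟨rIdeal x, hx', fun R hR => ?_⟩
    obtain ⟨w, hw⟩ := hR.1
    obtain ⟨z, hz⟩ := rIdeal_nonempty x
    have h1 : w * z ∈ R := hR.2.2.1 w hw z
    have h2 : w * z ∈ rIdeal x := by
      have hcl := mul_mem_closure (y := z) (u := w) univ_mem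
      refine closure_minimal ?_ (rIdeal_closed x) hcl
      rintro _ ⟨a, -, rfl⟩
      rw [← mem_stabSub.1 (claimB a), rIdeal_pure_mul]
      exact ⟨z, hz, lam_apply a z⟩
    exact min_eq_of_inter hR hx' ⟨w * z, h1, h2⟩
  · rintro ⟨R, hR, huniq⟩
    obtain ⟨z, hz⟩ := hR.1
    have hsub : rIdeal z ⊆ R := rIdeal_subset hR.2.1 hR.2.2.1 hz
    obtain ⟨R', hR'sub, hR'⟩ :=
      exists_min_subset (rIdeal_nonempty z) (rIdeal_closed z) (isRightIdeal_rIdeal z)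
    have hR'eq : R' = R := huniq R' hR'
    have hzR : rIdeal z = R := subset_antisymm hsub (hR'eq ▸ hR'sub)
    refine ⟨z, ?_, ?_⟩
    · show IsMinClosedRightIdeal (rIdeal z)
      rw [hzR]; exact hzR ▸ hR
    · refine Set.Finite.subset (Set.finite_singleton R) ?_
      rintro S ⟨g, rfl⟩
      have hmin : IsMinClosedRightIdeal (rIdeal ((pure g : Ultrafilter G) * z)) := by
        rw [rIdeal_pure_mul, hzR]
        exact lam_image_min g (hzR ▸ hR)
      exact Set.mem_singleton_iff.2 (huniq _ hmin)
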